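/- arXiv:0709.3348 — 6 statements merged into one kernel-verified Lean document; each statement's English description precedes it below -/
import Mathlib

section
/- Let X be a Banach space and let A and B be bounded linear operators on X with A∘B = B∘A. Then for every x ∈ X and every t ≥ 0, (B − A) applied to the Bochner integral ∫₀ᵗ exp((t−s)A)(exp(sB)x) ds equals exp(tB)x − exp(tA)x. (This is the first identity of Lemma 2 of the paper, in the bounded-generator case; when B − A is bijective it reads ∫₀ᵗ T_A(t−s)T_B(s)x ds = (B−A)⁻¹(T_B(t) − T_A(t))x.) -/
/-!
Since `A` and `B` commute, `exp((t - s)A) exp(sB) = exp(tA) exp(s(B - A))`, so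
`g(s) = exp((t - s)A)(exp(sB)x)` solves `g' = (B - A) g`. Integrating this ODE from `0` to `t`,
and pulling the bounded operator `B - A` out of the integral, gives `g(t) - g(0)`.
-/

open NormedSpace intervalIntegral Set

theorem ContinuousLinearMap.apply_integral_eq_sub_of_hasDerivAt
    {E : Type*} [NormedAddCommGroup E] [NormedSpace ℝ E] [CompleteSpace E]
    (L : E →L[ℝ] E) {f : ℝ → E} {a b : ℝ}
    (hf : ∀ s ∈ uIcc a b, HasDerivAt f (L (f s)) s) :
    L (∫ s in a..b, f s) = f b - f a := by
  have hcont : ContinuousOn f (uIcc a b) := HasDerivAt.continuousOn hf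
  rw [← L.intervalIntegral_comp_comm hcont.intervalIntegrable]
  exact integral_eq_sub_of_hasDerivAt hf
    (L.continuous.comp_continuousOn hcont).intervalIntegrable

section BanachAlgebra

variable {𝕂 𝔸 : Type*} [RCLike 𝕂] [NormedRing 𝔸] [NormedAlgebra 𝕂 𝔸] [CompleteSpace 𝔸]
  {a b : 𝔸}

theorem exp_sub_smul_mul_exp_smul_of_commute (hab : Commute a b) (t s : 𝕂) :
    exp ((t - s) • a) * exp (s • b) = exp (t • a) * exp (s • (b - a)) := by
  let : NormedAlgebra ℚ 𝔸 := NormedAlgebra.restrictScalars ℚ 𝕂 𝔸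
  rw [← exp_add_of_commute ((hab.smul_left _).smul_right _),
    ← exp_add_of_commute ((hab.sub_right (Commute.refl a)).smul_left _ |>.smul_right _)]
  congr 1
  module

theorem hasDerivAt_exp_sub_smul_mul_exp_smul_of_commute (hab : Commute a b) (t s : 𝕂) :
    HasDerivAt (fun u : 𝕂 => exp ((t - u) • a) * exp (u • b))
      ((b - a) * (exp ((t - s) • a) * exp (s • b))) s := by
  have hcomm : Commute (exp (t • a)) (b - a) :=
    ((hab.sub_right (Commute.refl a)).smul_left t).exp_left
  simp only [exp_sub_smul_mul_exp_smul_of_commute hab t]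
  rw [← mul_assoc, ← hcomm.eq, mul_assoc]
  exact (hasDerivAt_exp_smul_const' (b - a) s).const_mul _

end BanachAlgebra

theorem dAlembert_lemma2_first_general {X : Type*} [NormedAddCommGroup X] [NormedSpace ℝ X]
    [CompleteSpace X] (A B : X →L[ℝ] X) (hAB : A ∘L B = B ∘L A)
    (x : X) (t : ℝ) :
    (B - A) (∫ s in (0:ℝ)..t,
        (NormedSpace.exp ((t - s) • A)) ((NormedSpace.exp (s • B)) x))
      = (NormedSpace.exp (t • B)) x - (NormedSpace.exp (t • A)) x := by
  have hderiv : ∀ s : ℝ, HasDerivAt (fun u => exp ((t - u) • A) (exp (u • B) x))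
      ((B - A) (exp ((t - s) • A) (exp (s • B) x))) s := fun s =>
    (ContinuousLinearMap.apply ℝ X x).hasFDerivAt.comp_hasDerivAt s
      (hasDerivAt_exp_sub_smul_mul_exp_smul_of_commute hAB t s)
  rw [(B - A).apply_integral_eq_sub_of_hasDerivAt fun s _ => hderiv s]
  simp

/-- **Lemma 2 of the paper (first identity), bounded-generator case.**
For commuting bounded operators `A, B` on a Banach space `X`, every `x ∈ X` and `t ≥ 0`,
`(B − A) ∫₀ᵗ exp((t−s)A)(exp(sB)x) ds = exp(tB)x − exp(tA)x`. -/
theorem dAlembert_lemma2_first {X : Type*} [NormedAddCommGroup X] [NormedSpace ℝ X]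
    [CompleteSpace X] (A B : X →L[ℝ] X) (hAB : A ∘L B = B ∘L A)
    (x : X) (t : ℝ) (ht : 0 ≤ t) :
    (B - A) (∫ s in (0:ℝ)..t,
        (NormedSpace.exp ((t - s) • A)) ((NormedSpace.exp (s • B)) x))
      = (NormedSpace.exp (t • B)) x - (NormedSpace.exp (t • A)) x :=
  dAlembert_lemma2_first_general A B hAB x t
end

section
/- Let X be a Banach space, let A and B be bounded linear operators on X with A∘B = B∘A, let x ∈ X, let k ≥ 1 be an integer and t ≥ 0. Then (B − A) applied to ∫₀ᵗ exp((t−s)A)((sᵏ/k!)·exp(sB)x) ds equals (tᵏ/k!)·exp(tB)x − ∫₀ᵗ exp((t−s)A)((s^{k−1}/(k−1)!)·exp(sB)x) ds. (This is the recursion identity of Lemma 2 of the paper, in the bounded-generator case.) -/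
/-!
Put `F s = exp ((t - s) • A) (p s • exp (s • B) x)` with `p s = s ^ k / k!`. Since
`exp ((t - s) • A)` commutes with `B - A`,
`F' s = exp ((t - s) • A) (p' s • exp (s • B) x) + (B - A) (F s)`,
and `p' s = s ^ (k - 1) / (k - 1)!`.
Integrating over `[0, t]` and using `F 0 = 0` (as `k ≥ 1`) gives the identity.
-/

open NormedSpace

theorem hasDerivAt_pow_succ_div_factorial (k : ℕ) (s : ℝ) :
    HasDerivAt (fun s : ℝ => s ^ (k + 1) / ((k + 1).factorial : ℝ))
      (s ^ k / (k.factorial : ℝ)) s := by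
  refine ((hasDerivAt_pow (k + 1) s).div_const _).congr_deriv ?_
  rw [Nat.factorial_succ, Nat.cast_mul, Nat.add_sub_cancel, mul_div_mul_left]
  positivity

section

variable {E : Type*} [NormedAddCommGroup E] [NormedSpace ℝ E] [CompleteSpace E]

theorem hasDerivAt_exp_sub_smul_apply (A : E →L[ℝ] E) (t : ℝ) {f : ℝ → E} {f' : E}
    {s : ℝ} (hf : HasDerivAt f f' s) :
    HasDerivAt (fun u => exp ((t - u) • A) (f u)) (exp ((t - s) • A) (f' - A (f s))) s := by
  have hexp : HasDerivAt (fun u : ℝ => exp ((t - u) • A)) (-(exp ((t - s) • A) * A)) s := by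
    refine ((hasDerivAt_exp_smul_const A (t - s)).scomp s
      ((hasDerivAt_id s).const_sub t)).congr_deriv ?_
    rw [neg_one_smul]
  convert hexp.clm_apply hf using 1
  rw [map_sub, neg_apply, mul_apply_eq_comp]
  abel

theorem hasDerivAt_smul_exp_smul_apply (B : E →L[ℝ] E) (x : E) {p : ℝ → ℝ} {p' s : ℝ}
    (hp : HasDerivAt p p' s) :
    HasDerivAt (fun u => p u • exp (u • B) x)
      (p' • exp (s • B) x + B (p s • exp (s • B) x)) s := by
  refine (hp.smul ((hasDerivAt_exp_smul_const' B s).clm_apply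
    (hasDerivAt_const s x))).congr_deriv ?_
  rw [map_zero, add_zero, mul_apply_eq_comp, map_smul, add_comm]

theorem hasDerivAt_exp_sub_smul_smul_exp_smul_apply {A B : E →L[ℝ] E} (hAB : Commute A B)
    (t : ℝ) (x : E) {p : ℝ → ℝ} {p' s : ℝ} (hp : HasDerivAt p p' s) :
    HasDerivAt (fun u => exp ((t - u) • A) (p u • exp (u • B) x))
      (exp ((t - s) • A) (p' • exp (s • B) x)
        + (B - A) (exp ((t - s) • A) (p s • exp (s • B) x))) s := by
  have hcomm : Commute (exp ((t - s) • A)) (B - A) :=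
    ((hAB.sub_right (Commute.refl A)).smul_left (t - s)).exp_left
  convert hasDerivAt_exp_sub_smul_apply A t (hasDerivAt_smul_exp_smul_apply B x hp) using 1
  rw [← mul_apply_eq_comp (B - A), ← hcomm.eq, mul_apply_eq_comp, ← map_add, sub_apply,
    add_sub_assoc]

theorem ContinuousLinearMap.apply_intervalIntegral_eq_of_hasDerivAt (C : E →L[ℝ] E)
    {F G : ℝ → E} {a b : ℝ} (hF : ∀ s ∈ Set.uIcc a b, HasDerivAt F (G s + C (F s)) s)
    (hG : IntervalIntegrable G MeasureTheory.volume a b) :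
    C (∫ s in a..b, F s) = F b - F a - ∫ s in a..b, G s := by
  have hFc : ContinuousOn F (Set.uIcc a b) := fun s hs =>
    (hF s hs).continuousAt.continuousWithinAt
  have hCF : IntervalIntegrable (fun s => C (F s)) MeasureTheory.volume a b :=
    (C.continuous.comp_continuousOn hFc).intervalIntegrable
  rw [← intervalIntegral.integral_eq_sub_of_hasDerivAt hF (hG.add hCF),
    intervalIntegral.integral_add hG hCF, ← C.intervalIntegral_comp_comm hFc.intervalIntegrable]
  abel

end

theorem dAlembert_lemma2_recursion_general {X : Type*} [NormedAddCommGroup X] [NormedSpace ℝ X]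
    [CompleteSpace X] (A B : X →L[ℝ] X) (hAB : A ∘L B = B ∘L A)
    (x : X) (k : ℕ) (hk : 1 ≤ k) (t : ℝ) :
    (B - A) (∫ s in (0:ℝ)..t,
        (NormedSpace.exp ((t - s) • A))
          ((s ^ k / (Nat.factorial k : ℝ)) • (NormedSpace.exp (s • B)) x))
      = (t ^ k / (Nat.factorial k : ℝ)) • (NormedSpace.exp (t • B)) x
        - ∫ s in (0:ℝ)..t,
            (NormedSpace.exp ((t - s) • A))
              ((s ^ (k - 1) / (Nat.factorial (k - 1) : ℝ)) •
                (NormedSpace.exp (s • B)) x) := by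
  obtain ⟨j, rfl⟩ : ∃ j, k = j + 1 := ⟨k - 1, by omega⟩
  rw [Nat.add_sub_cancel]
  have hcomm : Commute A B := hAB
  have hG : Continuous fun s : ℝ =>
      exp ((t - s) • A) ((s ^ j / (j.factorial : ℝ)) • exp (s • B) x) :=
    continuous_iff_continuousAt.2 fun s =>
      (hasDerivAt_exp_sub_smul_smul_exp_smul_apply hcomm t x
        ((hasDerivAt_pow j s).div_const _)).continuousAt
  rw [(B - A).apply_intervalIntegral_eq_of_hasDerivAt
    (fun s _ => hasDerivAt_exp_sub_smul_smul_exp_smul_apply hcomm t x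
      (hasDerivAt_pow_succ_div_factorial j s))
    (hG.intervalIntegrable 0 t)]
  simp

/-- **Lemma 2 of the paper (recursion identity), bounded-generator case.**
For commuting bounded operators `A, B`, `x ∈ X`, an integer `k ≥ 1` and `t ≥ 0`,
`(B − A) ∫₀ᵗ exp((t−s)A)((sᵏ/k!)·exp(sB)x) ds
  = (tᵏ/k!)·exp(tB)x − ∫₀ᵗ exp((t−s)A)((s^{k−1}/(k−1)!)·exp(sB)x) ds`. -/
theorem dAlembert_lemma2_recursion {X : Type*} [NormedAddCommGroup X] [NormedSpace ℝ X]
    [CompleteSpace X] (A B : X →L[ℝ] X) (hAB : A ∘L B = B ∘L A)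
    (x : X) (k : ℕ) (hk : 1 ≤ k) (t : ℝ) (ht : 0 ≤ t) :
    (B - A) (∫ s in (0:ℝ)..t,
        (NormedSpace.exp ((t - s) • A))
          ((s ^ k / (Nat.factorial k : ℝ)) • (NormedSpace.exp (s • B)) x))
      = (t ^ k / (Nat.factorial k : ℝ)) • (NormedSpace.exp (t • B)) x
        - ∫ s in (0:ℝ)..t,
            (NormedSpace.exp ((t - s) • A))
              ((s ^ (k - 1) / (Nat.factorial (k - 1) : ℝ)) •
                (NormedSpace.exp (s • B)) x) :=
  dAlembert_lemma2_recursion_general A B hAB x k hk t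
end

section
/- Let X be a Banach space, let B₁,…,Bᵢ be pairwise commuting bounded linear operators on X, let S₁,…,Sᵢ ≥ 1 be integers with S₁ + ⋯ + Sᵢ = n, and for each j ∈ {1,…,i} and k ∈ {0,…,S_j−1} let y_{j,k} ∈ X. Define u(t) = Σ_{j=1}^{i} Σ_{k=0}^{S_j−1} (tᵏ/k!)·exp(tB_j) y_{j,k}. Then: (a) u is n-times differentiable and (d/dt − B₁)^{S₁} ∘ ⋯ ∘ (d/dt − Bᵢ)^{Sᵢ} u = 0; and (b) for every m ∈ {0,…,n−1}, the m-th derivative of u at 0 equals Σ_{j=1}^{i} Σ_{k=0}^{min(m, S_j−1)} (m choose k)·B_j^{m−k} y_{j,k}, i.e. the initial-data vector (u(0), u'(0), …, u^{(n−1)}(0)) equals Mₙ applied to the coefficient vector (y_{j,k}). (The existence and initial-data part of Theorem 1 of the paper, in the bounded-generator case.) -/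
/-!
In the basis `(tᵏ/k!) • exp (t • A) z`, an operator `d/dt − C` with `C` commuting with `A` acts on
coefficient sequences as the shift plus `A − C`. It never raises the degree bound of a coefficient
sequence, and for `C = A` it is the pure shift, which lowers the bound by one. As the `j`-th block
of `u` has degree `< S_j`, the factor `(d/dt − B_j)^{S_j}` kills it, wherever it stands among the
factors. Likewise the `m`-th derivative acts as `(shift + A)^m`, and its binomial expansion,
evaluated at `t = 0`, gives the entries of `Mₙ`.
-/

/-- `u` is (at least) `n`-times differentiable. -/
def NTimesDifferentiable {X : Type*} [NormedAddCommGroup X] [NormedSpace ℝ X]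
    (n : ℕ) (u : ℝ → X) : Prop :=
  ∀ m < n, Differentiable ℝ (iteratedDeriv m u)

/-- The first-order factor `(d/dt − A)` acting on functions `ℝ → X`. -/
noncomputable def factorOp {X : Type*} [NormedAddCommGroup X] [NormedSpace ℝ X]
    (A : X →L[ℝ] X) (u : ℝ → X) : ℝ → X :=
  fun t => deriv u t - A (u t)

/-- The composite factored operator `(d/dt − B₁)^{S₁} ∘ ⋯ ∘ (d/dt − Bᵢ)^{Sᵢ}`
(the last factor `(d/dt − Bᵢ)^{Sᵢ}` is applied first). -/
noncomputable def applyFactors {X : Type*} [NormedAddCommGroup X] [NormedSpace ℝ X]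
    {i : ℕ} (B : Fin i → X →L[ℝ] X) (S : Fin i → ℕ) (u : ℝ → X) : ℝ → X :=
  (List.ofFn fun j : Fin i => (factorOp (B j))^[S j]).foldr (· ∘ ·) id u

open Finset NormedSpace
open scoped Nat

section CoeffDeriv

variable {R M : Type*} [Semiring R] [AddCommMonoid M] [Module R M]

def coeffDeriv (T : Module.End R M) : Module.End R (ℕ → M) :=
  LinearMap.funLeft R M Nat.succ + T.compLeft ℕ

@[simp]
lemma coeffDeriv_apply (T : Module.End R M) (c : ℕ → M) (k : ℕ) :
    coeffDeriv T c k = c (k + 1) + T (c k) :=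
  rfl

lemma coeffDeriv_pow_apply (T : Module.End R M) (m : ℕ) (c : ℕ → M) (k : ℕ) :
    (coeffDeriv T ^ m) c k = ∑ r ∈ range (m + 1), m.choose r • (T ^ (m - r)) (c (k + r)) := by
  have hcomm : Commute (LinearMap.funLeft R M Nat.succ) (T.compLeft ℕ) := by
    ext
    rfl
  have hshift : ∀ r (c : ℕ → M), (LinearMap.funLeft R M Nat.succ ^ r) c = fun k => c (k + r) := by
    intro r
    induction r with
    | zero => exact fun _ => rfl
    | succ r ih => intro c; ext k; rw [pow_succ, Module.End.mul_apply, ih]; rfl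
  have hpointwise : ∀ j (c : ℕ → M), (T.compLeft ℕ ^ j) c = fun k => (T ^ j) (c k) := by
    intro j
    induction j with
    | zero => exact fun _ => rfl
    | succ j ih => intro c; ext k; rw [pow_succ, Module.End.mul_apply, ih]; rfl
  rw [coeffDeriv, hcomm.add_pow, LinearMap.sum_apply, Finset.sum_apply]
  refine sum_congr rfl fun r _ => ?_
  rw [Module.End.mul_apply, Module.End.natCast_apply, Module.End.mul_apply, hshift, hpointwise]
  simp

lemma coeffDeriv_pow_apply_eq_zero (T : Module.End R M) (m : ℕ) {c : ℕ → M} {K : ℕ}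
    (hc : ∀ k, K ≤ k → c k = 0) (k : ℕ) (hk : K ≤ k) : (coeffDeriv T ^ m) c k = 0 := by
  rw [coeffDeriv_pow_apply]
  exact sum_eq_zero fun r _ => by rw [hc (k + r) (by omega), map_zero, smul_zero]

lemma coeffDeriv_pow_apply_zero_of_truncated (T : Module.End R M) (m S : ℕ) (c : ℕ → M) :
    (coeffDeriv T ^ m) (fun k => if k < S then c k else 0) 0
      = ∑ k ∈ range (min (m + 1) S), m.choose k • (T ^ (m - k)) (c k) := by
  have hrange : range (min (m + 1) S) = (range (m + 1)).filter (· < S) := by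
    ext
    simp
  rw [coeffDeriv_pow_apply, hrange, sum_filter]
  refine sum_congr rfl fun k _ => ?_
  rw [zero_add]
  split_ifs <;> simp

end CoeffDeriv

lemma sum_range_mul_pow_pred_div_factorial_smul {E : Type*} [AddCommGroup E] [Module ℝ E]
    {N : ℕ} (v : ℕ → E) (hv : v N = 0) (t : ℝ) :
    ∑ k ∈ range N, (k * t ^ (k - 1) / k !) • v k = ∑ k ∈ range N, (t ^ k / k !) • v (k + 1) := by
  have hfac : ∀ k : ℕ, ((k + 1 : ℕ) * t ^ k / (k + 1) ! : ℝ) = t ^ k / k ! := by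
    intro k
    rw [Nat.factorial_succ]
    push_cast
    field_simp
  calc ∑ k ∈ range N, (k * t ^ (k - 1) / k !) • v k
      = ∑ k ∈ range (N + 1), (k * t ^ (k - 1) / k !) • v k := by
        rw [sum_range_succ, hv, smul_zero, add_zero]
    _ = ∑ k ∈ range N, (t ^ k / k !) • v (k + 1) := by
        simp only [sum_range_succ', CharP.cast_eq_zero, zero_mul, zero_div, zero_smul, add_zero,
          Nat.add_sub_cancel, hfac]

section ExpPoly

variable {X : Type*} [NormedAddCommGroup X] [NormedSpace ℝ X]

noncomputable def expPoly (A : X →L[ℝ] X) (N : ℕ) (c : ℕ → X) (t : ℝ) : X :=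
  ∑ k ∈ range N, (t ^ k / k !) • exp (t • A) (c k)

lemma expPoly_eq_of_le (A : X →L[ℝ] X) {K N : ℕ} (hKN : K ≤ N) {c : ℕ → X}
    (hc : ∀ k, K ≤ k → c k = 0) : expPoly A N c = expPoly A K c := by
  ext t
  refine (sum_subset (range_subset_range.mpr hKN) fun k _ hk => ?_).symm
  rw [hc k (by simpa using hk), map_zero, smul_zero]

lemma expPoly_zero (A : X →L[ℝ] X) {N : ℕ} (hN : 0 < N) (c : ℕ → X) : expPoly A N c 0 = c 0 := by
  rw [expPoly, sum_eq_single_of_mem 0 (mem_range.mpr hN) fun k _ hk => by simp [zero_pow hk]]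
  simp

lemma expPoly_truncated (A : X →L[ℝ] X) {S N : ℕ} (hSN : S ≤ N) (c : ℕ → X) (t : ℝ) :
    expPoly A N (fun k => if k < S then c k else 0) t
      = ∑ k ∈ range S, (t ^ k / k !) • exp (t • A) (c k) := by
  rw [expPoly_eq_of_le A hSN fun k hk => if_neg (by omega), expPoly]
  exact sum_congr rfl fun k hk => by rw [if_pos (mem_range.mp hk)]

variable [CompleteSpace X]

lemma hasDerivAt_pow_div_factorial_smul_exp_apply (A : X →L[ℝ] X) (k : ℕ) (z : X) (t : ℝ) :
    HasDerivAt (fun s : ℝ => (s ^ k / k !) • exp (s • A) z)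
      ((t ^ k / k !) • exp (t • A) (A z) + (k * t ^ (k - 1) / k !) • exp (t • A) z) t := by
  have hexp : HasDerivAt (fun s : ℝ => exp (s • A) z) (exp (t • A) (A z)) t := by
    simpa using (hasDerivAt_exp_smul_const A t).clm_apply (hasDerivAt_const t z)
  simpa [add_comm] using ((hasDerivAt_pow k t).div_const (k ! : ℝ)).fun_smul hexp

lemma hasDerivAt_expPoly (A : X →L[ℝ] X) {N : ℕ} (c : ℕ → X) (hc : c N = 0) (t : ℝ) :
    HasDerivAt (expPoly A N c) (expPoly A N (coeffDeriv (A : Module.End ℝ X) c) t) t := by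
  have h := HasDerivAt.fun_sum fun k (_ : k ∈ range N) =>
    hasDerivAt_pow_div_factorial_smul_exp_apply A k (c k) t
  rw [sum_add_distrib,
    sum_range_mul_pow_pred_div_factorial_smul (fun k => exp (t • A) (c k)) (by simp [hc])] at h
  convert h using 1
  · rfl
  · simp only [expPoly, coeffDeriv_apply, map_add, smul_add, sum_add_distrib, add_comm]
    rfl

end ExpPoly

section ExpPolySum

variable {X : Type*} [NormedAddCommGroup X] [NormedSpace ℝ X] {ι : Type*} [Fintype ι]

noncomputable def expPolySum (A : ι → X →L[ℝ] X) (N : ℕ) (c : ι → ℕ → X) (t : ℝ) : X :=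
  ∑ x, expPoly (A x) N (c x) t

def IsExpPolySum (A : ι → X →L[ℝ] X) (N : ℕ) (κ : ι → ℕ) (f : ℝ → X) : Prop :=
  (∀ x, κ x ≤ N) ∧ ∃ c : ι → ℕ → X, (∀ x k, κ x ≤ k → c x k = 0) ∧ f = expPolySum A N c

lemma IsExpPolySum.eq_zero {A : ι → X →L[ℝ] X} {N : ℕ} {κ : ι → ℕ} {f : ℝ → X}
    (hf : IsExpPolySum A N κ f) (hκ : ∀ x, κ x = 0) : f = 0 := by
  obtain ⟨-, c, hc, rfl⟩ := hf
  ext t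
  simp [expPolySum, expPoly, fun x k => hc x k ((hκ x).trans_le (Nat.zero_le k))]

variable [CompleteSpace X]

lemma hasDerivAt_expPolySum (A : ι → X →L[ℝ] X) {N : ℕ} (c : ι → ℕ → X)
    (hc : ∀ x, c x N = 0) (t : ℝ) :
    HasDerivAt (expPolySum A N c)
      (expPolySum A N (fun x => coeffDeriv (A x : Module.End ℝ X) (c x)) t) t :=
  HasDerivAt.fun_sum fun x _ => hasDerivAt_expPoly (A x) (c x) (hc x) t

lemma iteratedDeriv_expPolySum (A : ι → X →L[ℝ] X) {N : ℕ} {c : ι → ℕ → X}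
    (hc : ∀ x k, N ≤ k → c x k = 0) (m : ℕ) :
    iteratedDeriv m (expPolySum A N c)
      = expPolySum A N (fun x => (coeffDeriv (A x : Module.End ℝ X) ^ m) (c x)) := by
  induction m with
  | zero => simp
  | succ m ih =>
    ext t
    rw [iteratedDeriv_succ, ih]
    simp only [pow_succ', Module.End.mul_apply]
    exact (hasDerivAt_expPolySum A _
      (fun x => coeffDeriv_pow_apply_eq_zero _ m (hc x) N le_rfl) t).deriv

lemma differentiable_iteratedDeriv_expPolySum (A : ι → X →L[ℝ] X) {N : ℕ} {c : ι → ℕ → X}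
    (hc : ∀ x k, N ≤ k → c x k = 0) (m : ℕ) :
    Differentiable ℝ (iteratedDeriv m (expPolySum A N c)) := by
  rw [iteratedDeriv_expPolySum A hc]
  exact fun t => (hasDerivAt_expPolySum A _
    (fun x => coeffDeriv_pow_apply_eq_zero _ m (hc x) N le_rfl) t).differentiableAt

lemma factorOp_expPolySum (A : ι → X →L[ℝ] X) {N : ℕ} (c : ι → ℕ → X) (hc : ∀ x, c x N = 0)
    {C : X →L[ℝ] X} (hC : ∀ x, Commute C (A x)) :
    factorOp C (expPolySum A N c)
      = expPolySum A N (fun x => coeffDeriv ((A x - C : X →L[ℝ] X) : Module.End ℝ X) (c x)) := by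
  ext t
  have hCexp : ∀ x z, C (exp (t • A x) z) = exp (t • A x) (C z) := fun x z =>
    congr($((((hC x).smul_right t).symm.exp_left).eq.symm) z)
  rw [factorOp, (hasDerivAt_expPolySum A c hc t).deriv]
  simp only [expPolySum, expPoly, map_sum, map_smul, hCexp, ← sum_sub_distrib, ← smul_sub,
    ← map_sub, coeffDeriv_apply]
  simp [add_sub_assoc]

namespace IsExpPolySum

variable {A : ι → X →L[ℝ] X} {N : ℕ} {κ : ι → ℕ} {f : ℝ → X} [DecidableEq (X →L[ℝ] X)]

lemma factorOp {C : X →L[ℝ] X} (hC : ∀ x, Commute C (A x)) (hf : IsExpPolySum A N κ f) :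
    IsExpPolySum A N (fun x => κ x - if A x = C then 1 else 0) (factorOp C f) := by
  obtain ⟨hκN, c, hc, rfl⟩ := hf
  refine ⟨fun x => (Nat.sub_le _ _).trans (hκN x), _, fun x k hk => ?_,
    factorOp_expPolySum A c (fun x => hc x N (hκN x)) hC⟩
  by_cases hx : A x = C
  · simp only [hx, if_true] at hk
    simp [hx, hc x (k + 1) (by omega)]
  · simp only [hx, if_false, Nat.sub_zero] at hk
    simp [hc x k hk, hc x (k + 1) (by omega)]

lemma iterate_factorOp {C : X →L[ℝ] X} (hC : ∀ x, Commute C (A x))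
    (hf : IsExpPolySum A N κ f) (m : ℕ) :
    IsExpPolySum A N (fun x => κ x - if A x = C then m else 0) ((_root_.factorOp C)^[m] f) := by
  induction m with
  | zero => simpa using hf
  | succ m ih =>
    rw [Function.iterate_succ_apply']
    convert ih.factorOp hC using 2 with x
    split_ifs <;> omega

lemma applyFactors {q : ℕ} (B : Fin q → X →L[ℝ] X) (S : Fin q → ℕ)
    (hB : ∀ j x, Commute (B j) (A x)) (hf : IsExpPolySum A N κ f) :
    IsExpPolySum A N (fun x => κ x - ∑ j, if A x = B j then S j else 0)
      (_root_.applyFactors B S f) := by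
  induction q with
  | zero => simpa [_root_.applyFactors] using hf
  | succ q ih =>
    have h := (ih (fun j => B j.succ) (fun j => S j.succ) fun j => hB j.succ).iterate_factorOp
      (hB 0) (S 0)
    simp only [Nat.sub_sub] at h
    simp only [_root_.applyFactors, List.ofFn_succ, List.foldr_cons, Function.comp_apply,
      Fin.sum_univ_succ]
    convert h using 3 with x
    · exact add_comm _ _
    · rfl

end IsExpPolySum

end ExpPolySum

theorem dAlembert_theorem1_general {X : Type*} [NormedAddCommGroup X] [NormedSpace ℝ X]
    [CompleteSpace X] (i n : ℕ) (B : Fin i → X →L[ℝ] X)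
    (hcomm : ∀ j l, B j ∘L B l = B l ∘L B j)
    (S : Fin i → ℕ) (hn : ∑ j, S j = n)
    (y : Fin i → ℕ → X) (u : ℝ → X)
    (hu : ∀ t, u t = ∑ j, ∑ k ∈ Finset.range (S j),
        (t ^ k / (Nat.factorial k : ℝ)) • (NormedSpace.exp (t • B j)) (y j k)) :
    NTimesDifferentiable n u
      ∧ applyFactors B S u = (fun _ => 0)
      ∧ ∀ m < n, iteratedDeriv m u 0
          = ∑ j, ∑ k ∈ Finset.range (min (m + 1) (S j)),
              (Nat.choose m k : ℝ) • ((B j) ^ (m - k)) (y j k) := by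
  classical
  have hSn (j : Fin i) : S j ≤ n := hn ▸ single_le_sum (fun _ _ => Nat.zero_le _) (mem_univ j)
  set c : Fin i → ℕ → X := fun j k => if k < S j then y j k else 0
  have hc (j : Fin i) (k : ℕ) (hk : S j ≤ k) : c j k = 0 := if_neg (by omega)
  have hcn (j : Fin i) (k : ℕ) (hk : n ≤ k) : c j k = 0 := hc j k ((hSn j).trans hk)
  have hu_eq : u = expPolySum B n c :=
    funext fun t => (hu t).trans (sum_congr rfl fun j _ => (expPoly_truncated _ (hSn j) _ t).symm)
  refine ⟨fun m _ => hu_eq ▸ differentiable_iteratedDeriv_expPolySum B hcn m, ?_, fun m hm => ?_⟩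
  · have hu_mem : IsExpPolySum B n S u := ⟨hSn, c, hc, hu_eq⟩
    refine (hu_mem.applyFactors B S hcomm).eq_zero fun x => Nat.sub_eq_zero_of_le ?_
    simpa using single_le_sum (f := fun j => if B x = B j then S j else 0)
      (fun _ _ => Nat.zero_le _) (mem_univ x)
  · rw [hu_eq, iteratedDeriv_expPolySum B hcn, expPolySum]
    refine sum_congr rfl fun j _ => ?_
    rw [expPoly_zero _ (by omega), coeffDeriv_pow_apply_zero_of_truncated]
    refine sum_congr rfl fun k _ => ?_
    rw [Nat.cast_smul_eq_nsmul, ← ContinuousLinearMap.toLinearMap_pow]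
    rfl

/-- **Theorem 1 of the paper (existence and initial data), bounded-generator case:**
`u(t) = Σ_j Σ_{k<S_j} (tᵏ/k!)·exp(tB_j) y_{j,k}` is `n`-times differentiable, solves the
factored homogeneous equation, and its initial data are `Mₙ` applied to the coefficients. -/
theorem dAlembert_theorem1 {X : Type*} [NormedAddCommGroup X] [NormedSpace ℝ X]
    [CompleteSpace X] (i n : ℕ) (B : Fin i → X →L[ℝ] X)
    (hcomm : ∀ j l, B j ∘L B l = B l ∘L B j)
    (S : Fin i → ℕ) (hS : ∀ j, 1 ≤ S j) (hn : ∑ j, S j = n)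
    (y : Fin i → ℕ → X) (u : ℝ → X)
    (hu : ∀ t, u t = ∑ j, ∑ k ∈ Finset.range (S j),
        (t ^ k / (Nat.factorial k : ℝ)) • (NormedSpace.exp (t • B j)) (y j k)) :
    NTimesDifferentiable n u
      ∧ applyFactors B S u = (fun _ => 0)
      ∧ ∀ m < n, iteratedDeriv m u 0
          = ∑ j, ∑ k ∈ Finset.range (min (m + 1) (S j)),
              (Nat.choose m k : ℝ) • ((B j) ^ (m - k)) (y j k) :=
  dAlembert_theorem1_general i n B hcomm S hn y u hu
end

section
/- Let X be a Banach space and let A₁,…,Aₙ be pairwise commuting bounded linear operators on X. If u : ℝ → X is n-times differentiable, satisfies (d/dt − Aₙ)∘⋯∘(d/dt − A₁)u = 0, and u^{(k)}(0) = 0 for k = 0, 1, …, n−1, then u(t) = 0 for all t. Consequently, two n-times differentiable solutions of the factored homogeneous equation with the same initial data u^{(k)}(0), k = 0,…,n−1, coincide. (The uniqueness assertion of Theorem 1 of the paper, in the bounded-generator case.) -/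
/-- The composite `(d/dt − Aₙ)∘⋯∘(d/dt − A₁)` applied to `u`
(`(d/dt − A₁)`, i.e. the factor of index `0`, is applied first). -/
noncomputable def factorChain {X : Type*} [NormedAddCommGroup X] [NormedSpace ℝ X]
    {n : ℕ} (A : Fin n → X →L[ℝ] X) (u : ℝ → X) : ℝ → X :=
  (List.ofFn fun j : Fin n => factorOp (A j)).foldl (fun v F => F v) u

/-!
Induction on the number of factors. If `u` and `v` have the same data at `t₀` and
`(d/dt − Aₙ)⋯(d/dt − A₁)` agrees on them, then `w := (d/dt − A₁)u` and `(d/dt − A₁)v` have the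
same data of one order less (because `d/dt − A₁` commutes with `d/dt`) and agree under the
remaining `n − 1` factors, so by induction they are equal. Then `u` and `v` both solve the
linear ODE `x' = A₁ x + w` with the same initial value, and Grönwall-type uniqueness for
Lipschitz right-hand sides gives `u = v`.
-/

section

variable {X : Type*} [NormedAddCommGroup X] [NormedSpace ℝ X]

namespace NTimesDifferentiable

variable {n : ℕ} {u : ℝ → X}

lemma mono {m : ℕ} (hu : NTimesDifferentiable n u) (hmn : m ≤ n) :
    NTimesDifferentiable m u :=
  fun k hk => hu k (hk.trans_le hmn)

lemma differentiable (hu : NTimesDifferentiable (n + 1) u) : Differentiable ℝ u := by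
  simpa using hu 0 n.succ_pos

lemma const (n : ℕ) (c : X) : NTimesDifferentiable n (fun _ : ℝ => c) :=
  fun m _ => contDiff_const.differentiable_iteratedDeriv' m

end NTimesDifferentiable

section factorOp

variable (A : X →L[ℝ] X)

lemma factorOp_const_zero : factorOp A (fun _ : ℝ => (0 : X)) = fun _ => 0 := by
  funext t
  simp [factorOp]

lemma deriv_factorOp {g : ℝ → X} (hg : Differentiable ℝ g)
    (hg' : Differentiable ℝ (deriv g)) :
    deriv (factorOp A g) = factorOp A (deriv g) := by
  funext t
  exact ((hg' t).hasDerivAt.sub (A.hasFDerivAt.comp_hasDerivAt t (hg t).hasDerivAt)).deriv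

lemma iteratedDeriv_factorOp {m : ℕ} {u : ℝ → X} (hu : NTimesDifferentiable (m + 1) u) :
    iteratedDeriv m (factorOp A u) = factorOp A (iteratedDeriv m u) := by
  induction m with
  | zero => simp
  | succ m ih =>
    rw [iteratedDeriv_succ, ih (hu.mono m.succ.le_succ), iteratedDeriv_succ]
    have hdiff := hu (m + 1) (by omega)
    rw [iteratedDeriv_succ] at hdiff
    exact deriv_factorOp A (hu m (by omega)) hdiff

lemma NTimesDifferentiable.factorOp {n : ℕ} {u : ℝ → X}
    (hu : NTimesDifferentiable (n + 1) u) : NTimesDifferentiable n (factorOp A u) := by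
  intro m hm
  rw [iteratedDeriv_factorOp A (hu.mono (by omega : m + 1 ≤ n + 1))]
  unfold _root_.factorOp
  rw [← iteratedDeriv_succ]
  exact (hu (m + 1) (by omega)).sub (A.differentiable.comp (hu m (by omega)))

lemma eq_of_factorOp_eq {u v : ℝ → X} (hu : Differentiable ℝ u) (hv : Differentiable ℝ v)
    (h : factorOp A u = factorOp A v) {t₀ : ℝ} (h₀ : u t₀ = v t₀) : u = v := by
  have hsol : ∀ {x : ℝ → X}, Differentiable ℝ x → factorOp A x = factorOp A u →
      ∀ t, HasDerivAt x (A (x t) + factorOp A u t) t ∧ x t ∈ Set.univ := by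
    intro x hx hxu t
    refine ⟨?_, trivial⟩
    rw [← hxu]
    simpa [_root_.factorOp] using (hx t).hasDerivAt
  exact ODE_solution_unique_univ (K := ‖A‖₊ + 1)
    (fun t => (A.lipschitz.add (LipschitzWith.const' (K := 1) (factorOp A u t))).lipschitzOnWith)
    (hsol hu rfl) (hsol hv h.symm) h₀

end factorOp

lemma factorChain_succ {n : ℕ} (A : Fin (n + 1) → X →L[ℝ] X) (u : ℝ → X) :
    factorChain A u = factorChain (Fin.tail A) (factorOp (A 0) u) := by
  simp [factorChain, List.ofFn_succ, Fin.tail]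

lemma factorChain_const_zero {n : ℕ} (A : Fin n → X →L[ℝ] X) :
    factorChain A (fun _ : ℝ => (0 : X)) = fun _ => 0 := by
  induction n with
  | zero => simp [factorChain]
  | succ n ih => rw [factorChain_succ, factorOp_const_zero, ih]

theorem eq_of_factorChain_eq {n : ℕ} (A : Fin n → X →L[ℝ] X) {u v : ℝ → X}
    (hu : NTimesDifferentiable n u) (hv : NTimesDifferentiable n v)
    (h : factorChain A u = factorChain A v) {t₀ : ℝ}
    (h₀ : ∀ k < n, iteratedDeriv k u t₀ = iteratedDeriv k v t₀) : u = v := by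
  induction n generalizing u v with
  | zero => simpa [factorChain] using h
  | succ n ih =>
    have hfactor : factorOp (A 0) u = factorOp (A 0) v := by
      refine ih (Fin.tail A) (hu.factorOp _) (hv.factorOp _) ?_ fun k hk => ?_
      · rwa [← factorChain_succ, ← factorChain_succ]
      · rw [iteratedDeriv_factorOp _ (hu.mono (by omega)),
          iteratedDeriv_factorOp _ (hv.mono (by omega))]
        simp only [factorOp, ← iteratedDeriv_succ]
        rw [h₀ k (by omega), h₀ (k + 1) (by omega)]
    exact eq_of_factorOp_eq (A 0) hu.differentiable hv.differentiable hfactor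
      (by simpa using h₀ 0 n.succ_pos)

end

theorem dAlembert_theorem1_uniqueness_general {X : Type*} [NormedAddCommGroup X] [NormedSpace ℝ X]
    (n : ℕ) (A : Fin n → X →L[ℝ] X) :
    (∀ u : ℝ → X, NTimesDifferentiable n u → factorChain A u = (fun _ => 0) →
        (∀ k < n, iteratedDeriv k u 0 = 0) → ∀ t, u t = 0)
      ∧ ∀ u v : ℝ → X, NTimesDifferentiable n u → NTimesDifferentiable n v →
          factorChain A u = (fun _ => 0) → factorChain A v = (fun _ => 0) →
          (∀ k < n, iteratedDeriv k u 0 = iteratedDeriv k v 0) → ∀ t, u t = v t := by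
  constructor
  · intro u hu hchain h₀
    refine congrFun (eq_of_factorChain_eq A hu (.const n 0) ?_ (t₀ := 0) fun k hk => ?_)
    · rw [hchain, factorChain_const_zero]
    · simp [h₀ k hk]
  · intro u v hu hv hu0 hv0 h₀
    exact congrFun (eq_of_factorChain_eq A hu hv (hu0.trans hv0.symm) h₀)

/-- **Uniqueness in Theorem 1 of the paper, bounded-generator case:**
an `n`-times differentiable solution of the factored homogeneous equation with zero initial
data vanishes identically; consequently two solutions with the same initial data coincide. -/
theorem dAlembert_theorem1_uniqueness {X : Type*} [NormedAddCommGroup X] [NormedSpace ℝ X]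
    [CompleteSpace X] (n : ℕ) (A : Fin n → X →L[ℝ] X)
    (hcomm : ∀ j l, A j ∘L A l = A l ∘L A j) :
    (∀ u : ℝ → X, NTimesDifferentiable n u → factorChain A u = (fun _ => 0) →
        (∀ k < n, iteratedDeriv k u 0 = 0) → ∀ t, u t = 0)
      ∧ ∀ u v : ℝ → X, NTimesDifferentiable n u → NTimesDifferentiable n v →
          factorChain A u = (fun _ => 0) → factorChain A v = (fun _ => 0) →
          (∀ k < n, iteratedDeriv k u 0 = iteratedDeriv k v 0) → ∀ t, u t = v t :=
  dAlembert_theorem1_uniqueness_general n A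
end

section
/- Let X be a Banach space, let B₁,…,Bᵢ be pairwise commuting bounded linear operators on X such that B_j − B_l is bijective for all j ≠ l, and let S₁,…,Sᵢ ≥ 1 be integers with S₁ + ⋯ + Sᵢ = n. Then the linear map Φ from the product of n copies of X (indexed by pairs (j,k) with 1 ≤ j ≤ i, 0 ≤ k ≤ S_j−1) to Xⁿ defined by Φ((y_{j,k}))_m = Σ_{j=1}^{i} Σ_{k=0}^{min(m, S_j−1)} (m choose k)·B_j^{m−k} y_{j,k} for m = 0,…,n−1 is bijective. (The invertibility of the operator matrix Mₙ asserted in Theorem 1 of the paper, under the bounded-operator analogue of hypotheses (A1)′ and (A2)′.) -/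
/-!
The transpose of `Mₙ` sends the coefficient vector of a polynomial `q` of degree `< n` to its
Taylor coefficients `(taylor (b j) q).coeff k`, `k < S j`: it is the Hermite interpolation map.
Over a commutative ring in which every `b j - b l` is a unit, the ideals `((X - b j) ^ S j)` are
pairwise coprime, so the Chinese remainder theorem (followed by reduction modulo
`∏ (X - b j) ^ S j`, of degree `n`) makes this map surjective; a square matrix over a commutative
ring with a one-sided inverse is invertible. The operators `B j` lie in the double centralizer of
`{B j}`, a commutative ring that also contains the inverses of the `B j - B l` (bounded by the
open mapping theorem), and the inverse matrix with entries there inverts `Φ` on `Xⁿ`.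
-/

open Polynomial Matrix

section Taylor

variable {A : Type*} [CommRing A]

theorem taylor_coeff_eq_sum_choose (r : A) {n : ℕ} {q : A[X]} (hq : q.degree < n) (k : ℕ) :
    (taylor r q).coeff k =
      ∑ m : Fin n, q.coeff m * (((m : ℕ).choose k : A) * r ^ ((m : ℕ) - k)) := by
  rw [sum_fin (fun m a => a * ((m.choose k : A) * r ^ (m - k))) (fun _ => zero_mul _) hq,
    taylor_coeff, hasseDeriv_apply, Polynomial.sum, eval_finsetSum, Polynomial.sum]
  refine Finset.sum_congr rfl fun m _ => ?_
  rw [eval_monomial]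
  ring

theorem taylor_coeff_eq_of_dvd_sub {r : A} {S : ℕ} {p q : A[X]} (h : (X - C r) ^ S ∣ p - q)
    {k : ℕ} (hk : k < S) : (taylor r p).coeff k = (taylor r q).coeff k := by
  obtain ⟨c, hc⟩ := h
  have htaylor : taylor r (p - q) = X ^ S * taylor r c := by
    rw [hc, taylor_mul, taylor_pow, map_sub, taylor_X, taylor_C, add_sub_cancel_right]
  rw [← sub_eq_zero, ← coeff_sub, ← map_sub, htaylor, coeff_X_pow_mul', if_neg (by omega)]

theorem exists_degree_lt_taylor_coeff_eq {ι : Type*} [Fintype ι] {b : ι → A}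
    (hb : Pairwise fun j l => IsUnit (b j - b l)) (S : ι → ℕ) (t : (Σ j, Fin (S j)) → A) :
    ∃ q : A[X], q.degree < ∑ j, S j ∧
      ∀ σ : Σ j, Fin (S j), (taylor (b σ.1) q).coeff σ.2 = t σ := by
  set T : ι → A[X] := fun j => taylor (-b j) (∑ k : Fin (S j), monomial k (t ⟨j, k⟩))
  obtain ⟨p, hp⟩ := Ideal.exists_forall_sub_mem_ideal
    (I := fun j => Ideal.span {(X - C (b j)) ^ S j}) (fun j l hjl =>
      (Ideal.isCoprime_span_singleton_iff _ _).mpr (isCoprime_X_sub_C_of_isUnit_sub (hb hjl)).pow) T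
  set f := ∏ j, (X - C (b j)) ^ S j
  have hf : f.Monic := monic_prod_of_monic _ _ fun j _ => (monic_X_sub_C (b j)).pow (S j)
  have hfdeg : f.natDegree ≤ ∑ j, S j :=
    (natDegree_prod_le _ _).trans <| Finset.sum_le_sum fun j _ =>
      (natDegree_pow_le_of_le _ (natDegree_X_sub_C_le _)).trans_eq (mul_one _)
  refine ⟨p %ₘ f, ?_, fun ⟨j, k⟩ => ?_⟩
  · rcases subsingleton_or_nontrivial A with _ | _
    · rw [Subsingleton.elim (p %ₘ f) 0, degree_zero]
      exact WithBot.bot_lt_coe _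
    exact (degree_modByMonic_lt p hf).trans_le (degree_le_natDegree.trans (by exact_mod_cast hfdeg))
  have hdvd : (X - C (b j)) ^ S j ∣ p %ₘ f - T j := by
    rw [modByMonic_eq_sub_mul_div p f, sub_right_comm]
    exact dvd_sub (Ideal.mem_span_singleton.mp (hp j))
      (dvd_mul_of_dvd_left (Finset.dvd_prod_of_mem _ (Finset.mem_univ j)) _)
  rw [taylor_coeff_eq_of_dvd_sub hdvd k.isLt, taylor_taylor, add_neg_cancel, taylor_zero,
    finsetSum_coeff, Finset.sum_eq_single k]
  · simp
  · intro l _ hl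
    rw [coeff_monomial, if_neg (fun h => hl (Fin.ext h))]
  · simp

end Taylor

/-- The paper's `Mₙ`. For `k > m` the truncated exponent `m - k` is harmless: the binomial
coefficient vanishes. -/
def confluentVandermonde {R ι : Type*} [Semiring R] (b : ι → R) (S : ι → ℕ) (n : ℕ) :
    Matrix (Fin n) (Σ j, Fin (S j)) R :=
  Matrix.of fun m σ => ((m : ℕ).choose σ.2 : R) * b σ.1 ^ ((m : ℕ) - σ.2)

section ConfluentVandermonde

variable {A ι : Type*} [CommRing A] {b : ι → A} {S : ι → ℕ} {n : ℕ}

theorem coeff_vecMul_confluentVandermonde {q : A[X]} (hq : q.degree < n) :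
    (fun m : Fin n => q.coeff m) ᵥ* confluentVandermonde b S n =
      fun σ => (taylor (b σ.1) q).coeff σ.2 := by
  ext σ
  rw [taylor_coeff_eq_sum_choose _ hq]
  rfl

theorem exists_inverse_confluentVandermonde [Fintype ι] [DecidableEq ι]
    (hb : Pairwise fun j l => IsUnit (b j - b l)) (hn : ∑ j, S j = n) :
    ∃ N : Matrix (Σ j, Fin (S j)) (Fin n) A,
      N * confluentVandermonde b S n = 1 ∧ confluentVandermonde b S n * N = 1 := by
  classical
  have hsurj : Function.Surjective (confluentVandermonde b S n).vecMul := fun t => by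
    obtain ⟨q, hq, hqt⟩ := exists_degree_lt_taylor_coeff_eq hb S t
    exact ⟨_, (coeff_vecMul_confluentVandermonde (hn ▸ hq)).trans (funext hqt)⟩
  obtain ⟨N, hN⟩ := vecMul_surjective_iff_exists_left_inverse.mp hsurj
  exact ⟨N, hN, (mul_eq_one_comm_of_card_eq _ _ _ (by simp [hn])).mp hN⟩

end ConfluentVandermonde

section MatrixAction

variable {R M : Type*} [Ring R] [AddCommGroup M] [Module R M]

theorem Matrix.sum_smul_sum_smul {ι κ τ : Type*} [Fintype κ] [Fintype τ] (W : Matrix ι κ R)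
    (N : Matrix κ τ R) (y : τ → M) (m : ι) :
    ∑ σ, W m σ • ∑ t, N σ t • y t = ∑ t, (W * N) m t • y t := by
  simp only [Finset.smul_sum, smul_smul, mul_apply, Finset.sum_smul]
  exact Finset.sum_comm

theorem Matrix.bijective_sum_smul_of_mul_eq_one {ι κ : Type*} [Fintype ι] [Fintype κ]
    [DecidableEq ι] [DecidableEq κ] {W : Matrix ι κ R} {N : Matrix κ ι R}
    (hWN : W * N = 1) (hNW : N * W = 1) :
    Function.Bijective fun (y : κ → M) m => ∑ σ, W m σ • y σ := by
  refine Function.bijective_iff_has_inverse.mpr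
    ⟨fun v σ => ∑ m, N σ m • v m, fun y => ?_, fun v => ?_⟩ <;>
  · funext
    simp only [sum_smul_sum_smul, hWN, hNW, one_apply, ite_smul, one_smul, zero_smul,
      Finset.sum_ite_eq, Finset.mem_univ, if_true]

end MatrixAction

section Centralizer

variable {R : Type*} [Ring R]

theorem Subring.isMulCommutative_centralizer_centralizer {s : Set R}
    (hs : ∀ x ∈ s, ∀ y ∈ s, x * y = y * x) :
    IsMulCommutative (Subring.centralizer (Set.centralizer s)) :=
  .of_setLike_mul_comm fun _ h₁ _ h₂ => Set.centralizer_centralizer_comm_of_comm hs _ h₁ _ h₂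

theorem Subring.isUnit_of_isUnit_coe_centralizer {s : Set R} {x : Subring.centralizer s}
    (hx : IsUnit (x : R)) : IsUnit x := by
  obtain ⟨u, hu⟩ := hx
  have hinv : (↑u⁻¹ : R) ∈ Subring.centralizer s := fun g hg =>
    Commute.units_inv_right (hu ▸ x.2 g hg)
  exact isUnit_iff_exists.mpr
    ⟨⟨_, hinv⟩, Subtype.ext (by simp [← hu]), Subtype.ext (by simp [← hu])⟩

end Centralizer

open scoped IsMulCommutative in
theorem bijective_sum_confluentVandermonde_smul {R M ι : Type*} [Ring R] [AddCommGroup M]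
    [Module R M] [Fintype ι] [DecidableEq ι] {b : ι → R} (hcomm : ∀ j l, Commute (b j) (b l))
    (hb : Pairwise fun j l => IsUnit (b j - b l)) {S : ι → ℕ} {n : ℕ} (hn : ∑ j, S j = n) :
    Function.Bijective fun (y : (Σ j, Fin (S j)) → M) m =>
      ∑ σ, confluentVandermonde b S n m σ • y σ := by
  set A := Subring.centralizer (Set.centralizer (Set.range b))
  have : IsMulCommutative A := Subring.isMulCommutative_centralizer_centralizer <| by
    rintro _ ⟨j, rfl⟩ _ ⟨l, rfl⟩
    exact hcomm j l
  let b' : ι → A := fun j => ⟨b j, Set.subset_centralizer_centralizer ⟨j, rfl⟩⟩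
  obtain ⟨N, hNW, hWN⟩ := exists_inverse_confluentVandermonde (b := b')
    (fun j l h => Subring.isUnit_of_isUnit_coe_centralizer (hb h)) hn
  have hmap : (confluentVandermonde b' S n).map A.subtype = confluentVandermonde b S n := by
    ext
    simp [confluentVandermonde, b']
  refine Matrix.bijective_sum_smul_of_mul_eq_one (N := N.map A.subtype) ?_ ?_ <;>
  · rw [← hmap, ← Matrix.map_mul]
    simp [hWN, hNW]

theorem Mn_bijective_general {X : Type*} [NormedAddCommGroup X] [NormedSpace ℝ X]
    [CompleteSpace X] (i n : ℕ) (B : Fin i → X →L[ℝ] X)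
    (hcomm : ∀ j l, B j ∘L B l = B l ∘L B j)
    (hbij : ∀ j l, j ≠ l → Function.Bijective (B j - B l))
    (S : Fin i → ℕ) (hn : ∑ j, S j = n) :
    Function.Bijective (fun (y : ((j : Fin i) × Fin (S j)) → X) =>
      fun m : Fin n =>
        ∑ j : Fin i, ∑ k : Fin (S j),
          if (k : ℕ) ≤ (m : ℕ) then
            (Nat.choose (m : ℕ) (k : ℕ) : ℝ) • ((B j) ^ ((m : ℕ) - (k : ℕ))) (y ⟨j, k⟩)
          else 0) := by
  have hunit : Pairwise fun j l => IsUnit (B j - B l) := fun j l h =>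
    ContinuousLinearMap.isUnit_iff_bijective.mpr (hbij j l h)
  convert bijective_sum_confluentVandermonde_smul (M := X) hcomm hunit hn using 3 with y m
  rw [Fintype.sum_sigma]
  refine Finset.sum_congr rfl fun j _ => Finset.sum_congr rfl fun k _ => ?_
  split_ifs with hkm
  · simp [confluentVandermonde, Nat.cast_smul_eq_nsmul]
  · simp [confluentVandermonde, Nat.choose_eq_zero_of_lt (not_le.mp hkm)]

/-- **Invertibility of the operator matrix `Mₙ` (Theorem 1 of the paper)** under the
bounded-operator analogue of hypotheses (A1)′ and (A2)′: if the `B_j` pairwise commute and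
`B_j − B_l` is bijective for `j ≠ l`, then the block operator map `Φ = Mₙ` sending the
coefficient vector `(y_{j,k})` to the initial-data vector is bijective. -/
theorem Mn_bijective {X : Type*} [NormedAddCommGroup X] [NormedSpace ℝ X]
    [CompleteSpace X] (i n : ℕ) (B : Fin i → X →L[ℝ] X)
    (hcomm : ∀ j l, B j ∘L B l = B l ∘L B j)
    (hbij : ∀ j l, j ≠ l → Function.Bijective (B j - B l))
    (S : Fin i → ℕ) (hS : ∀ j, 1 ≤ S j) (hn : ∑ j, S j = n) :
    Function.Bijective (fun (y : ((j : Fin i) × Fin (S j)) → X) =>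
      fun m : Fin n =>
        ∑ j : Fin i, ∑ k : Fin (S j),
          if (k : ℕ) ≤ (m : ℕ) then
            (Nat.choose (m : ℕ) (k : ℕ) : ℝ) • ((B j) ^ ((m : ℕ) - (k : ℕ))) (y ⟨j, k⟩)
          else 0) :=
  Mn_bijective_general i n B hcomm hbij S hn
end

section
/- Let X be a Banach space, let A be a bounded linear operator on X, let n ≥ 1, and let f : ℝ → X be continuous. Then the function u(t) = ∫₀ᵗ ((t−s)^{n−1}/(n−1)!)·exp((t−s)A) f(s) ds is n-times differentiable on [0,∞), satisfies (d/dt − A)ⁿ u = f, and satisfies u^{(m)}(0) = 0 for m = 0, 1, …, n−1. (Formula (3.12) of the paper: the solution of the repeated-root inhomogeneous equation with zero initial data, in the bounded-generator case.) -/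
/-!
Write `u = exp(tA) w`, where `w(t) = ∫₀ᵗ (t−s)^{n−1}/(n−1)! · g(s) ds` is Cauchy's formula for
the `n`-fold primitive of `g(s) = exp(−sA) f(s)`. Since `(d/dt − A)(exp(tA) w) = exp(tA) w'`,
the functions `uₖ` (built from the `k`-fold primitive, with `u₀ = f`) satisfy
`uₖ₊₁' = uₖ + A uₖ₊₁`. Hence `(d/dt − A)ⁿ uₙ = u₀ = f`, and by induction on `m`,
`uₙ^{(m)} = ∑ᵢ C(m,i) Aⁱ u_{n−m+i}`; for `m < n` every index is positive, so this is
differentiable and vanishes at `0`.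

The derivative of the `(k+1)`-fold primitive is computed by expanding `(t−s)^k` binomially,
which separates the variables of the kernel.
-/

open NormedSpace Finset Nat

theorem hasDerivAt_integral_separable_kernel {X : Type*} [NormedAddCommGroup X]
    [NormedSpace ℝ X] [CompleteSpace X] {ι : Type*} (S : Finset ι) {a b : ι → ℝ → ℝ}
    {K K' : ℝ → ℝ → ℝ} (hK : ∀ t s, K t s = ∑ i ∈ S, a i t * b i s)
    (ha : ∀ i, Differentiable ℝ (a i)) (hb : ∀ i, Continuous (b i))
    (hK' : ∀ t s, HasDerivAt (K · s) (K' t s) t) {g : ℝ → X} (hg : Continuous g) (t : ℝ) :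
    HasDerivAt (fun t => ∫ s in (0:ℝ)..t, K t s • g s)
      (K t t • g t + ∫ s in (0:ℝ)..t, K' t s • g s) t := by
  have hsplit (t : ℝ) (c : ℝ → ℝ) (α : ι → ℝ) (hc : ∀ s, c s = ∑ i ∈ S, α i * b i s) :
      ∫ s in (0:ℝ)..t, c s • g s = ∑ i ∈ S, α i • ∫ s in (0:ℝ)..t, b i s • g s := by
    simp_rw [hc, Finset.sum_smul, mul_smul]
    rw [intervalIntegral.integral_finsetSum fun i _ =>
      (Continuous.intervalIntegrable (by fun_prop) _ _)]
    exact Finset.sum_congr rfl fun i _ => intervalIntegral.integral_smul _ _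
  have hK'_eq (s : ℝ) : K' t s = ∑ i ∈ S, deriv (a i) t * b i s :=
    (hK' t s).unique <| by
      simp_rw [hK]
      exact HasDerivAt.fun_sum fun i _ => (ha i t).hasDerivAt.mul_const (b i s)
  have hderiv := HasDerivAt.fun_sum fun i (_ : i ∈ S) =>
    (ha i t).hasDerivAt.smul ((hb i).smul hg |>.integral_hasStrictDerivAt 0 t).hasDerivAt
  rw [funext fun t => hsplit t _ _ (hK t), hK, hsplit t _ _ hK'_eq, Finset.sum_smul]
  simpa only [Finset.sum_add_distrib, mul_smul, Pi.smul_apply'] using hderiv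

section IteratedIntegral

variable {X : Type*} [NormedAddCommGroup X] [NormedSpace ℝ X]

/-- Cauchy's formula for the `n`-fold primitive of `g` vanishing at `0`. -/
noncomputable def iteratedIntegral (g : ℝ → X) : ℕ → ℝ → X
  | 0 => g
  | n + 1 => fun t => ∫ s in (0:ℝ)..t, ((t - s) ^ n / n !) • g s

theorem sub_pow_div_factorial_eq_sum (n : ℕ) (t s : ℝ) :
    (t - s) ^ n / n ! = ∑ j ∈ range (n + 1), (n.choose j / n ! * t ^ (n - j)) * (-s) ^ j := by
  rw [sub_eq_neg_add, add_pow, Finset.sum_div]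
  exact Finset.sum_congr rfl fun j _ => by ring

theorem hasDerivAt_sub_pow_div_factorial (n : ℕ) (t s : ℝ) :
    HasDerivAt (fun t => (t - s) ^ (n + 1) / (n + 1)!) ((t - s) ^ n / n !) t := by
  refine ((((hasDerivAt_id t).sub_const s).pow (n + 1)).div_const ((n + 1)! : ℝ)).congr_deriv ?_
  rw [factorial_succ]
  push_cast
  field_simp
  simp

theorem hasDerivAt_iteratedIntegral_succ [CompleteSpace X] {g : ℝ → X} (hg : Continuous g)
    (n : ℕ) (t : ℝ) : HasDerivAt (iteratedIntegral g (n + 1)) (iteratedIntegral g n t) t := by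
  cases n with
  | zero =>
    simpa [iteratedIntegral] using (hg.integral_hasStrictDerivAt 0 t).hasDerivAt
  | succ n =>
    simpa [iteratedIntegral] using hasDerivAt_integral_separable_kernel _
      (sub_pow_div_factorial_eq_sum (n + 1)) (fun j => by fun_prop) (fun j => by fun_prop)
      (hasDerivAt_sub_pow_div_factorial n) hg t

end IteratedIntegral

theorem exp_add_smul {𝔸 : Type*} [NormedRing 𝔸] [NormedAlgebra ℝ 𝔸] [CompleteSpace 𝔸] (a : 𝔸)
    (t s : ℝ) : exp ((t + s) • a) = exp (t • a) * exp (s • a) := by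
  rw [add_smul]
  exact exp_add_of_commute_of_mem_ball (𝕂 := ℝ) ((Commute.refl a).smul_left t |>.smul_right s)
    ((expSeries_radius_eq_top ℝ 𝔸).symm ▸ edist_lt_top _ _)
    ((expSeries_radius_eq_top ℝ 𝔸).symm ▸ edist_lt_top _ _)

section Duhamel

variable {X : Type*} [NormedAddCommGroup X] [NormedSpace ℝ X] (A : X →L[ℝ] X) {f : ℝ → X}

noncomputable def duhamel (f : ℝ → X) (n : ℕ) (t : ℝ) : X :=
  exp (t • A) (iteratedIntegral (fun s => exp ((-s) • A) (f s)) n t)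

theorem duhamel_succ_apply_zero (n : ℕ) : duhamel A f (n + 1) 0 = 0 := by
  simp only [duhamel, iteratedIntegral, intervalIntegral.integral_same, map_zero]

variable [CompleteSpace X]

theorem exp_smul_apply_exp_smul_apply (t s : ℝ) (x : X) :
    exp (t • A) (exp (s • A) x) = exp ((t + s) • A) x := by
  rw [exp_add_smul A t s]
  rfl

theorem continuous_exp_neg_smul_apply (hf : Continuous f) :
    Continuous fun s => exp ((-s) • A) (f s) :=
  ((differentiable_exp_smul_const ℝ A).continuous.comp continuous_neg).clm_apply hf

theorem duhamel_zero : duhamel A f 0 = f := by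
  ext t
  rw [duhamel, iteratedIntegral, exp_smul_apply_exp_smul_apply, add_neg_cancel, zero_smul,
    exp_zero]
  rfl

theorem duhamel_succ_apply (hf : Continuous f) (n : ℕ) (t : ℝ) :
    duhamel A f (n + 1) t =
      ∫ s in (0:ℝ)..t, ((t - s) ^ n / n !) • exp ((t - s) • A) (f s) := by
  have hcont : Continuous fun s => ((t - s) ^ n / n ! : ℝ) • exp ((-s) • A) (f s) :=
    (by fun_prop : Continuous fun s : ℝ => (t - s) ^ n / (n ! : ℝ)).smul
      (continuous_exp_neg_smul_apply A hf)
  rw [duhamel, iteratedIntegral,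
    ← ContinuousLinearMap.intervalIntegral_comp_comm _ (hcont.intervalIntegrable _ _)]
  refine intervalIntegral.integral_congr fun s _ => ?_
  rw [ContinuousLinearMap.map_smul, exp_smul_apply_exp_smul_apply, sub_eq_add_neg]

theorem hasDerivAt_duhamel_succ (hf : Continuous f) (n : ℕ) (t : ℝ) :
    HasDerivAt (duhamel A f (n + 1)) (duhamel A f n t + A (duhamel A f (n + 1) t)) t := by
  rw [add_comm (duhamel A f n t)]
  exact (hasDerivAt_exp_smul_const' A t).clm_apply
    (hasDerivAt_iteratedIntegral_succ (continuous_exp_neg_smul_apply A hf) n t)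

end Duhamel

section FactorChain

variable {X : Type*} [NormedAddCommGroup X] [NormedSpace ℝ X] {A : X →L[ℝ] X}

theorem factorOp_eq_of_hasDerivAt {v w : ℝ → X} (h : ∀ t, HasDerivAt v (w t + A (v t)) t) :
    factorOp A v = w :=
  funext fun t => by rw [factorOp, (h t).deriv, add_sub_cancel_right]

variable {V : ℕ → ℝ → X} (hV : ∀ k t, HasDerivAt (V (k + 1)) (V k t + A (V (k + 1) t)) t)
include hV

theorem factorOp_iterate_eq (n : ℕ) : (factorOp A)^[n] (V n) = V 0 := by
  induction n with
  | zero => rfl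
  | succ n ih => rw [Function.iterate_succ_apply, factorOp_eq_of_hasDerivAt (hV n), ih]

theorem iteratedDeriv_eq_sum_choose (m k : ℕ) :
    iteratedDeriv m (V (k + m)) =
      fun t => ∑ i ∈ range (m + 1), m.choose i • (A ^ i) (V (k + i) t) := by
  induction m generalizing k with
  | zero => ext t; simp
  | succ m ih =>
    ext t
    rw [iteratedDeriv_succ, ← add_assoc, add_right_comm, ih (k + 1)]
    have hterm (i : ℕ) : HasDerivAt (fun t => m.choose i • (A ^ i) (V (k + 1 + i) t))
        (m.choose i • (A ^ i) (V (k + i) t + A (V (k + i + 1) t))) t := by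
      rw [add_right_comm]
      exact ((A ^ i).hasFDerivAt.comp_hasDerivAt t (hV (k + i) t)).const_smul (m.choose i)
    rw [(HasDerivAt.fun_sum fun i _ => hterm i).deriv]
    simpa [map_add, smul_add, pow_succ, add_assoc, sum_add_distrib] using
      (sum_choose_succ_nsmul (fun i _ => (A ^ i) (V (k + i) t)) m).symm

theorem differentiable_iteratedDeriv_of_lt {m n : ℕ} (hmn : m < n) :
    Differentiable ℝ (iteratedDeriv m (V n)) := by
  obtain ⟨k, rfl⟩ := Nat.exists_eq_add_of_lt hmn
  rw [show m + k + 1 = k + 1 + m by omega, iteratedDeriv_eq_sum_choose hV]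
  refine Differentiable.fun_sum fun i _ t => ?_
  rw [add_right_comm]
  exact ((A ^ i).differentiableAt.comp t (hV (k + i) t).differentiableAt).const_smul (m.choose i)

theorem iteratedDeriv_eq_zero_of_lt {t₀ : ℝ} (h₀ : ∀ k, V (k + 1) t₀ = 0) {m n : ℕ}
    (hmn : m < n) : iteratedDeriv m (V n) t₀ = 0 := by
  obtain ⟨k, rfl⟩ := Nat.exists_eq_add_of_lt hmn
  rw [show m + k + 1 = k + 1 + m by omega, iteratedDeriv_eq_sum_choose hV]
  refine Finset.sum_eq_zero fun i _ => ?_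
  rw [add_right_comm, h₀, map_zero, smul_zero]

end FactorChain

/-- **Formula (3.12) of the paper, bounded-generator case:**
`u(t) = ∫₀ᵗ ((t−s)^{n−1}/(n−1)!)·exp((t−s)A) f(s) ds` is `n`-times differentiable, solves
`(d/dt − A)ⁿ u = f`, and has zero initial data `u^{(m)}(0) = 0`, `m = 0,…,n−1`. -/
theorem repeated_root_inhomogeneous {X : Type*} [NormedAddCommGroup X] [NormedSpace ℝ X]
    [CompleteSpace X] (A : X →L[ℝ] X) (n : ℕ) (hn : 1 ≤ n)
    (f : ℝ → X) (hf : Continuous f) (u : ℝ → X)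
    (hu : ∀ t, u t = ∫ s in (0:ℝ)..t,
        ((t - s) ^ (n - 1) / (Nat.factorial (n - 1) : ℝ)) •
          (NormedSpace.exp ((t - s) • A)) (f s)) :
    NTimesDifferentiable n u
      ∧ (factorOp A)^[n] u = f
      ∧ ∀ m < n, iteratedDeriv m u 0 = 0 := by
  obtain ⟨n, rfl⟩ : ∃ k, n = k + 1 := ⟨n - 1, by omega⟩
  obtain rfl : u = duhamel A f (n + 1) :=
    funext fun t => by rw [hu, duhamel_succ_apply A hf, Nat.add_sub_cancel]
  have hV := hasDerivAt_duhamel_succ A hf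
  exact ⟨fun m hm => differentiable_iteratedDeriv_of_lt hV hm,
    by rw [factorOp_iterate_eq hV, duhamel_zero],
    fun m hm => iteratedDeriv_eq_zero_of_lt hV (duhamel_succ_apply_zero A) hm⟩
end
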